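/- For any x ∈ (P_n)^d, the earth mover's distance satisfies EMD(x) = ∑_{j=1}^{n} C(X¹_j, ..., X^d_j), where C(y) = min_{a ∈ ℝ} ∑_{i=1}^d |y_i - a| and X^i_j = x^i_1 + ... + x^i_j are the cumulative sums. -/

import Mathlib

open Finset

/-- `C(y) = min_{a ∈ ℝ} ∑ |yᵢ - a|` (the infimum is attained). -/
noncomputable def Cmin {d : ℕ} (y : Fin d → ℝ) : ℝ :=
  sInf (Set.range fun a : ℝ => ∑ i, |y i - a|)

/-- The cumulative sum `X_j = x₁ + ⋯ + x_j` of `x ∈ ℝ^{n+1}`. -/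
noncomputable def cdf {n : ℕ} (x : Fin (n + 1) → ℝ) (j : ℕ) : ℝ :=
  ∑ k : Fin (n + 1), if (k : ℕ) < j then x k else 0

/-! The cost of a point splits along thresholds: `C(y + 1) = ∑_{j=1}^{n} C(layer j y)` with
`layer j y = (1[y_i < j])_i`. As `C` is sublinear and the `j`-th layer of a plan with margins `x^i`
averages to `(X^i_j)_i`, every plan costs at least `∑_j C(X_j)`. Conversely, the comonotone
coupling draws one uniform level `u ∈ [0, 1]` and sends it to the quantiles of all `x^i`; its
`j`-th layer is then `(1[u < X^i_j])_i`, and charging the levels below a center `b` against the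
center `1` and those above `b` against `0` bounds the cost of that layer by `∑_i |X^i_j - b|`. -/

lemma Finset.fold_op_left {α β : Type*} {op : β → β → β} [Std.Commutative op]
    [Std.Associative op] (s : Finset α) (f : α → β) (a b : β) :
    s.fold op (op a b) f = op a (s.fold op b f) := by
  simpa using fold_disjUnion (op := op) (b₁ := a) (b₂ := b) (f := f) (disjoint_empty_left s)

lemma Fin.fold_univ_succAbove {β : Type*} {op : β → β → β} [hc : Std.Commutative op]
    [Std.Associative op] {d : ℕ} (b : β) (f : Fin (d + 1) → β) (i : Fin (d + 1)) :
    univ.fold op b f = univ.fold op (op b (f i)) fun k => f (i.succAbove k) := by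
  rw [Fin.univ_succAbove _ i, fold_cons, fold_map, hc.comm b, fold_op_left]
  rfl

lemma sum_comp_mul_eq_sum_fiberwise {α β : Type*} [Fintype α] [Fintype β] [DecidableEq β]
    (g : α → β) (f : β → ℝ) (T : α → ℝ) :
    ∑ a, f (g a) * T a = ∑ b, f b * ∑ a with g a = b, T a := by
  rw [← sum_fiberwise univ g]
  refine sum_congr rfl fun b _ => ?_
  rw [mul_sum]
  exact sum_congr rfl fun a ha => by rw [(mem_filter.1 ha).2]

section Cmin

variable {d : ℕ}

lemma Cmin_le (v : Fin d → ℝ) (a : ℝ) : Cmin v ≤ ∑ i, |v i - a| :=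
  csInf_le ⟨0, by rintro r ⟨b, rfl⟩; positivity⟩ ⟨a, rfl⟩

lemma le_Cmin {v : Fin d → ℝ} {c : ℝ} (h : ∀ a, c ≤ ∑ i, |v i - a|) : c ≤ Cmin v :=
  le_csInf (Set.range_nonempty _) (by rintro r ⟨a, rfl⟩; exact h a)

lemma abs_sub_max_min_le {v lo hi : ℝ} (hv : v ∈ Set.Icc lo hi) (a : ℝ) :
    |v - max lo (min hi a)| ≤ |v - a| := by
  obtain ⟨hlo, hhi⟩ := hv
  rcases le_total a lo with h | h
  · rw [min_eq_right (h.trans hlo |>.trans hhi), max_eq_left h,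
      abs_of_nonneg (by linarith), abs_of_nonneg (by linarith)]
    linarith
  rcases le_total a hi with h' | h'
  · rw [min_eq_right h', max_eq_right h]
  · rw [min_eq_left h', max_eq_right (hlo.trans hhi), abs_of_nonpos (by linarith),
      abs_of_nonpos (by linarith)]
    linarith

lemma le_Cmin_of_mem_Icc {v : Fin d → ℝ} {lo hi c : ℝ} (hv : ∀ i, v i ∈ Set.Icc lo hi)
    (hlohi : lo ≤ hi) (h : ∀ a ∈ Set.Icc lo hi, c ≤ ∑ i, |v i - a|) : c ≤ Cmin v :=
  le_Cmin fun a =>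
    (h _ ⟨le_max_left _ _, max_le hlohi (min_le_left _ _)⟩).trans <|
      sum_le_sum fun i _ => abs_sub_max_min_le (hv i) a

lemma Cmin_add_le (v w : Fin d → ℝ) : Cmin (v + w) ≤ Cmin v + Cmin w := by
  have key : ∀ a b, Cmin (v + w) ≤ (∑ i, |v i - a|) + ∑ i, |w i - b| := fun a b =>
    calc Cmin (v + w) ≤ ∑ i, |(v + w) i - (a + b)| := Cmin_le _ _
      _ ≤ ∑ i, (|v i - a| + |w i - b|) := sum_le_sum fun i _ => by
          rw [Pi.add_apply, add_sub_add_comm]; exact abs_add_le _ _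
      _ = _ := sum_add_distrib
  have h : ∀ a, Cmin (v + w) - ∑ i, |v i - a| ≤ Cmin w :=
    fun a => le_Cmin fun b => by linarith [key a b]
  have h' : Cmin (v + w) - Cmin w ≤ Cmin v := le_Cmin fun a => by linarith [h a]
  linarith

lemma Cmin_smul_le {t : ℝ} (ht : 0 ≤ t) (v : Fin d → ℝ) : Cmin (t • v) ≤ t * Cmin v := by
  rcases ht.eq_or_lt with rfl | ht
  · simpa using Cmin_le (0 : Fin d → ℝ) 0
  rw [← div_le_iff₀' ht]
  refine le_Cmin fun a => (div_le_iff₀' ht).2 ?_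
  calc Cmin (t • v) ≤ ∑ i, |(t • v) i - t * a| := Cmin_le _ _
    _ = t * ∑ i, |v i - a| := by
        simp_rw [mul_sum, Pi.smul_apply, smul_eq_mul, ← mul_sub, abs_mul, abs_of_pos ht]

lemma Cmin_sum_le {ι : Type*} (s : Finset ι) (v : ι → Fin d → ℝ) :
    Cmin (∑ k ∈ s, v k) ≤ ∑ k ∈ s, Cmin (v k) := by
  induction s using Finset.cons_induction with
  | empty => simpa using Cmin_le (0 : Fin d → ℝ) 0
  | cons a s ha ih =>
    rw [sum_cons, sum_cons]
    exact (Cmin_add_le _ _).trans (by gcongr)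

lemma Cmin_const_sub_le (c : ℝ) (v : Fin d → ℝ) : Cmin (fun i => c - v i) ≤ Cmin v :=
  le_Cmin fun a => (Cmin_le _ (c - a)).trans_eq <|
    sum_congr rfl fun i _ => by rw [sub_sub_sub_cancel_left, abs_sub_comm]

end Cmin

def lengthIcc (a b : ℝ) : ℝ := max 0 (b - a)

lemma lengthIcc_nonneg (a b : ℝ) : 0 ≤ lengthIcc a b := le_max_left _ _

lemma lengthIcc_add_lengthIcc (a b : ℝ) : lengthIcc a b + lengthIcc b a = |a - b| := by
  simp only [lengthIcc, max_def, abs_eq_max_neg]; split_ifs <;> linarith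

lemma lengthIcc_eq_add (b l r : ℝ) :
    lengthIcc l r = lengthIcc l (min b r) + lengthIcc (max b l) r := by
  simp only [lengthIcc, max_def, min_def]; split_ifs <;> linarith

lemma lengthIcc_max_min (c e : ℝ) {g g' : ℝ} (h : g ≤ g') :
    lengthIcc (max c g) (min e g') = max c (min e g') - max c (min e g) := by
  simp only [lengthIcc, max_def, min_def]; split_ifs <;> linarith

lemma sum_Ico_lengthIcc {G : ℕ → ℝ} (hG : Monotone G) (c e : ℝ) {p q : ℕ} (hpq : p ≤ q) :
    ∑ k ∈ Ico p q, lengthIcc (max c (G k)) (min e (G (k + 1))) =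
      lengthIcc (max c (G p)) (min e (G q)) := by
  rw [sum_congr rfl fun k _ => lengthIcc_max_min c e (hG k.le_succ),
    sum_Ico_sub (fun k => max c (min e (G k))) hpq, lengthIcc_max_min c e (hG hpq)]

lemma sum_abs_lengthIcc_sub_le (n : ℕ) (s t : ℝ) :
    ∑ j ∈ Icc 1 n, |lengthIcc (max s j) (j + 1) - lengthIcc (max t j) (j + 1)| ≤ |s - t| := by
  wlog hst : s ≤ t generalizing s t
  · simpa only [abs_sub_comm] using this t s (le_of_not_ge hst)
  have hterm : ∀ j : ℕ, lengthIcc (max s j) (j + 1) - lengthIcc (max t j) (j + 1) =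
      lengthIcc (max s ((j : ℕ) : ℝ)) (min t ((j + 1 : ℕ) : ℝ)) := fun j => by
    push_cast; simp only [lengthIcc, max_def, min_def]; split_ifs <;> linarith
  simp_rw [hterm, abs_of_nonneg (lengthIcc_nonneg _ _)]
  rw [← Ico_add_one_right_eq_Icc, sum_Ico_lengthIcc Nat.mono_cast s t (by omega : 1 ≤ n + 1),
    abs_sub_comm, abs_of_nonneg (sub_nonneg.2 hst)]
  simp only [lengthIcc, max_def, min_def]; split_ifs <;> push_cast at * <;> linarith

section Layer

variable {d n : ℕ}

def layer (j : ℕ) (y : Fin d → Fin (n + 1)) : Fin d → ℝ :=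
  fun i => if (y i : ℕ) < j then 1 else 0

lemma layer_eq_lengthIcc (j : ℕ) (y : Fin d → Fin (n + 1)) (i : Fin d) :
    layer j y i = lengthIcc (max ((y i : ℕ) + 1 : ℝ) j) (j + 1) := by
  rcases lt_or_ge (y i : ℕ) j with h | h
  · have hj : ((y i : ℕ) + 1 : ℝ) ≤ j := by exact_mod_cast h
    simp [layer, h, lengthIcc, max_eq_right hj]
  · have hj : (j : ℝ) ≤ (y i : ℕ) := by exact_mod_cast h
    rw [layer, if_neg h.not_gt, lengthIcc, max_eq_left (by linarith : (j : ℝ) ≤ _),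
      max_eq_left (by linarith)]

lemma sum_layer_apply (y : Fin d → Fin (n + 1)) (i : Fin d) :
    ∑ j ∈ Icc 1 n, layer j y i = n - (y i : ℕ) := by
  have hfilter : {j ∈ Icc 1 n | (y i : ℕ) < j} = Icc ((y i : ℕ) + 1) n := by
    ext k; simp only [mem_filter, mem_Icc]; omega
  simp only [layer, sum_boole, hfilter, Nat.card_Icc]
  rw [Nat.add_sub_add_right, Nat.cast_sub (Nat.lt_succ_iff.1 (y i).2)]

theorem Cmin_succ_eq_sum_Cmin_layer (y : Fin d → Fin (n + 1)) :
    Cmin (fun i => ((y i : ℕ) + 1 : ℝ)) = ∑ j ∈ Icc 1 n, Cmin (layer j y) := by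
  apply le_antisymm
  · have hy : (fun i => ((y i : ℕ) + 1 : ℝ)) =
        fun i => (n + 1 : ℝ) - (∑ j ∈ Icc 1 n, layer j y) i := by
      funext i; rw [Finset.sum_apply, sum_layer_apply]; ring
    rw [hy]
    exact (Cmin_const_sub_le _ _).trans (Cmin_sum_le _ _)
  · -- The layers of a real center `a` are `lengthIcc (max a j) (j + 1)`, `1`-Lipschitz in `ℓ¹`.
    refine le_Cmin fun a => ?_
    calc ∑ j ∈ Icc 1 n, Cmin (layer j y)
        ≤ ∑ j ∈ Icc 1 n, ∑ i, |layer j y i - lengthIcc (max a j) (j + 1)| :=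
          sum_le_sum fun j _ => Cmin_le _ _
      _ = ∑ i, ∑ j ∈ Icc 1 n,
            |lengthIcc (max ((y i : ℕ) + 1 : ℝ) j) (j + 1) - lengthIcc (max a j) (j + 1)| := by
          rw [sum_comm]; simp_rw [layer_eq_lengthIcc]
      _ ≤ ∑ i, |((y i : ℕ) + 1 : ℝ) - a| :=
          sum_le_sum fun i _ => sum_abs_lengthIcc_sub_le n _ _

end Layer

section LowerBound

variable {d n : ℕ} {x : Fin d → Fin (n + 1) → ℝ} {T : (Fin d → Fin (n + 1)) → ℝ}

lemma cdf_eq_sum_smul_layer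
    (hT : ∀ i j, ∑ y ∈ univ.filter (fun y : Fin d → Fin (n + 1) => y i = j), T y = x i j)
    (j : ℕ) : (fun i => cdf (x i) j) = ∑ y, T y • layer j y := by
  funext i
  have h := sum_comp_mul_eq_sum_fiberwise (fun y : Fin d → Fin (n + 1) => y i)
    (fun k => if (k : ℕ) < j then (1 : ℝ) else 0) T
  simp only [hT, ite_mul, one_mul, zero_mul] at h
  rw [cdf, ← h, Finset.sum_apply]
  simp only [Pi.smul_apply, smul_eq_mul, layer, mul_ite, mul_one, mul_zero]

theorem sum_Cmin_cdf_le_cost (hT0 : ∀ y, 0 ≤ T y)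
    (hT : ∀ i j, ∑ y ∈ univ.filter (fun y : Fin d → Fin (n + 1) => y i = j), T y = x i j) :
    ∑ j ∈ Icc 1 n, Cmin (fun i => cdf (x i) j) ≤
      ∑ y : Fin d → Fin (n + 1), Cmin (fun i => ((y i : ℕ) + 1 : ℝ)) * T y :=
  calc ∑ j ∈ Icc 1 n, Cmin (fun i => cdf (x i) j)
      ≤ ∑ j ∈ Icc 1 n, ∑ y, T y * Cmin (layer j y) := sum_le_sum fun j _ => by
        rw [cdf_eq_sum_smul_layer hT j]
        exact (Cmin_sum_le _ _).trans (sum_le_sum fun y _ => Cmin_smul_le (hT0 y) _)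
    _ = ∑ y, Cmin (fun i => ((y i : ℕ) + 1 : ℝ)) * T y := by
        rw [sum_comm]
        simp_rw [Cmin_succ_eq_sum_Cmin_layer, sum_mul, mul_comm]

end LowerBound

section ComonotonePlan

variable {d n : ℕ}

/-- The mass of `y` under the comonotone (quantile) coupling of the distributions with
distribution functions `G i`, restricted to quantile levels in `[c, e]`: the length of
`[c, e] ∩ ⋂ i, [G i (y i), G i (y i + 1)]`. -/
def comonotonePlan (G : Fin d → ℕ → ℝ) (c e : ℝ) (y : Fin d → Fin (n + 1)) : ℝ :=
  lengthIcc (univ.fold max c fun i => G i (y i)) (univ.fold min e fun i => G i (y i + 1))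

lemma comonotonePlan_nonneg (G : Fin d → ℕ → ℝ) (c e : ℝ) (y : Fin d → Fin (n + 1)) :
    0 ≤ comonotonePlan G c e y :=
  lengthIcc_nonneg _ _

lemma comonotonePlan_eq_add (G : Fin d → ℕ → ℝ) {c b e : ℝ} (hcb : c ≤ b) (hbe : b ≤ e)
    (y : Fin d → Fin (n + 1)) :
    comonotonePlan G c e y = comonotonePlan G c b y + comonotonePlan G b e y := by
  have hmin : (univ.fold min b fun i => G i (y i + 1)) =
      min b (univ.fold min e fun i => G i (y i + 1)) := by
    rw [← fold_op_left (op := min), min_eq_left hbe]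
  have hmax : (univ.fold max b fun i => G i (y i)) =
      max b (univ.fold max c fun i => G i (y i)) := by
    rw [← fold_op_left (op := max), max_eq_left hcb]
  rw [comonotonePlan, comonotonePlan, comonotonePlan, hmin, hmax]
  exact lengthIcc_eq_add b _ _

lemma sum_filter_comonotonePlan_eq_sum (G : Fin (d + 1) → ℕ → ℝ) (c e : ℝ) (i : Fin (d + 1))
    (j : Fin (n + 1)) :
    ∑ y with y i = j, comonotonePlan G c e y =
      ∑ z : Fin d → Fin (n + 1),
        comonotonePlan (fun k => G (i.succAbove k)) (max c (G i j)) (min e (G i (j + 1))) z := by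
  refine sum_bij' (fun y _ => i.removeNth y) (fun z _ => i.insertNth j z) (by simp) (by simp)
    (fun y hy => ?_) (fun z _ => Fin.removeNth_insertNth _ _ _) (fun y hy => ?_)
  · rw [← (mem_filter.1 hy).2]; exact Fin.insertNth_self_removeNth i y
  · rw [comonotonePlan, comonotonePlan, Fin.fold_univ_succAbove _ _ i,
      Fin.fold_univ_succAbove _ _ i, (mem_filter.1 hy).2]
    rfl

variable {G : Fin d → ℕ → ℝ} {c e : ℝ}

theorem sum_comonotonePlan (hG : ∀ i, Monotone (G i)) (hc : ∀ i, G i 0 ≤ c)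
    (he : ∀ i, e ≤ G i (n + 1)) :
    ∑ y : Fin d → Fin (n + 1), comonotonePlan G c e y = lengthIcc c e := by
  induction d generalizing c e with
  | zero => simp [comonotonePlan]
  | succ d ih =>
    rw [← sum_fiberwise univ fun y : Fin (d + 1) → Fin (n + 1) => y 0]
    simp_rw [sum_filter_comonotonePlan_eq_sum G c e 0]
    rw [sum_congr rfl fun j _ => ih (fun k => hG _)
      (fun k => (hc _).trans (le_max_left _ _)) (fun k => (min_le_left _ _).trans (he _))]
    rw [Fin.sum_univ_eq_sum_range (fun k => lengthIcc (max c (G 0 k)) (min e (G 0 (k + 1)))),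
      range_eq_Ico, sum_Ico_lengthIcc (hG 0) c e (Nat.zero_le _), max_eq_left (hc 0),
      min_eq_left (he 0)]

theorem sum_filter_comonotonePlan (hG : ∀ i, Monotone (G i)) (hc : ∀ i, G i 0 ≤ c)
    (he : ∀ i, e ≤ G i (n + 1)) (i : Fin d) (j : Fin (n + 1)) :
    ∑ y with y i = j, comonotonePlan G c e y =
      lengthIcc (max c (G i j)) (min e (G i (j + 1))) := by
  obtain _ | d := d
  · exact i.elim0
  rw [sum_filter_comonotonePlan_eq_sum]
  exact sum_comonotonePlan (fun k => hG _) (fun k => (hc _).trans (le_max_left _ _))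
    (fun k => (min_le_left _ _).trans (he _))

theorem sum_indicator_Ico_mul_comonotonePlan (hG : ∀ i, Monotone (G i)) (hc : ∀ i, G i 0 ≤ c)
    (he : ∀ i, e ≤ G i (n + 1)) (i : Fin d) {p q : ℕ} (hpq : p ≤ q) (hq : q ≤ n + 1) :
    ∑ y : Fin d → Fin (n + 1), (if (y i : ℕ) ∈ Ico p q then 1 else 0) * comonotonePlan G c e y =
      lengthIcc (max c (G i p)) (min e (G i q)) := by
  have hIco : {k ∈ range (n + 1) | k ∈ Ico p q} = Ico p q := by
    ext k; simp only [mem_filter, mem_range, mem_Ico]; omega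
  refine (sum_comp_mul_eq_sum_fiberwise (fun y : Fin d → Fin (n + 1) => y i)
    (fun k : Fin (n + 1) => if (k : ℕ) ∈ Ico p q then 1 else 0) _).trans ?_
  simp_rw [sum_filter_comonotonePlan hG hc he, ite_mul, one_mul, zero_mul]
  rw [Fin.sum_univ_eq_sum_range (fun k => if k ∈ Ico p q then
      lengthIcc (max c (G i k)) (min e (G i (k + 1))) else 0), ← sum_filter, hIco,
    sum_Ico_lengthIcc (hG i) c e hpq]

end ComonotonePlan

theorem sum_Cmin_layer_mul_comonotonePlan_le {d n : ℕ} {G : Fin d → ℕ → ℝ}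
    (hG : ∀ i, Monotone (G i)) (h0 : ∀ i, G i 0 = 0) (h1 : ∀ i, G i (n + 1) = 1) {j : ℕ}
    (hj : j ≤ n) :
    ∑ y : Fin d → Fin (n + 1), Cmin (layer j y) * comonotonePlan G 0 1 y ≤
      Cmin fun i => G i j := by
  have hGj : ∀ i, G i j ∈ Set.Icc 0 1 := fun i =>
    ⟨h0 i ▸ hG i (Nat.zero_le j), h1 i ▸ hG i (by omega)⟩
  refine le_Cmin_of_mem_Icc hGj zero_le_one fun b hb => ?_
  -- Split the levels at `b`: below `b` use the center `1`, above `b` the center `0`.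
  have hpoint : ∀ y : Fin d → Fin (n + 1), Cmin (layer j y) * comonotonePlan G 0 1 y ≤
      ∑ i, ((if (y i : ℕ) ∈ Ico j (n + 1) then 1 else 0) * comonotonePlan G 0 b y +
        (if (y i : ℕ) ∈ Ico 0 j then 1 else 0) * comonotonePlan G b 1 y) := by
    intro y
    have hle : ∀ a, Cmin (layer j y) ≤ ∑ i, |layer j y i - a| := Cmin_le _
    rw [comonotonePlan_eq_add G hb.1 hb.2, mul_add, sum_add_distrib, ← sum_mul, ← sum_mul]
    gcongr
    · exact comonotonePlan_nonneg _ _ _ _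
    · refine (hle 1).trans_eq (sum_congr rfl fun i _ => ?_)
      simp only [layer, mem_Ico]
      split_ifs <;> norm_num <;> omega
    · exact comonotonePlan_nonneg _ _ _ _
    · refine (hle 0).trans_eq (sum_congr rfl fun i _ => ?_)
      simp only [layer, mem_Ico]
      split_ifs <;> norm_num <;> omega
  calc ∑ y, Cmin (layer j y) * comonotonePlan G 0 1 y
      ≤ ∑ y, ∑ i, ((if (y i : ℕ) ∈ Ico j (n + 1) then 1 else 0) * comonotonePlan G 0 b y +
          (if (y i : ℕ) ∈ Ico 0 j then 1 else 0) * comonotonePlan G b 1 y) :=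
        sum_le_sum fun y _ => hpoint y
    _ = ∑ i, (lengthIcc (max 0 (G i j)) (min b (G i (n + 1))) +
          lengthIcc (max b (G i 0)) (min 1 (G i j))) := by
        rw [sum_comm]
        refine sum_congr rfl fun i _ => ?_
        rw [sum_add_distrib,
          sum_indicator_Ico_mul_comonotonePlan hG (fun k => (h0 k).le)
            (fun k => (h1 k).ge.trans' hb.2) i (by omega) le_rfl,
          sum_indicator_Ico_mul_comonotonePlan hG (fun k => (h0 k).trans_le hb.1)
            (fun k => (h1 k).ge) i (Nat.zero_le j) (by omega)]
    _ = ∑ i, |G i j - b| := sum_congr rfl fun i _ => by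
        rw [h0, h1, max_eq_right (hGj i).1, min_eq_left hb.2, max_eq_left hb.1,
          min_eq_right (hGj i).2, lengthIcc_add_lengthIcc]

section Cdf

variable {n : ℕ} {x : Fin (n + 1) → ℝ}

lemma cdf_zero : cdf x 0 = 0 := by simp [cdf]

lemma cdf_succ (j : Fin (n + 1)) : cdf x (j + 1) = cdf x j + x j := by
  rw [cdf, cdf, ← add_sum_erase _ _ (mem_univ j), ← add_sum_erase _ _ (mem_univ j),
    if_pos (Nat.lt_succ_self _), if_neg (lt_irrefl _), zero_add, add_comm]
  congr 1
  refine sum_congr rfl fun k hk => ?_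
  have hkj : (k : ℕ) ≠ j := Fin.val_ne_of_ne (ne_of_mem_erase hk)
  simp only [Nat.lt_succ_iff_lt_or_eq, hkj, or_false]

lemma cdf_mono (hx : ∀ k, 0 ≤ x k) : Monotone (cdf x) := fun a b hab =>
  sum_le_sum fun k _ => by split_ifs <;> first | rfl | exact hx k | omega

lemma cdf_of_le (hx : ∑ k, x k = 1) {j : ℕ} (hj : n + 1 ≤ j) : cdf x j = 1 := by
  rw [← hx]
  exact sum_congr rfl fun k _ => if_pos (k.2.trans_le hj)

end Cdf

section Coupling

variable {n d : ℕ} {x : Fin d → Fin (n + 1) → ℝ}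

lemma sum_filter_comonotonePlan_cdf (hx0 : ∀ i k, 0 ≤ x i k) (hx1 : ∀ i, ∑ k, x i k = 1)
    (i : Fin d) (j : Fin (n + 1)) :
    ∑ y with y i = j, comonotonePlan (fun i => cdf (x i)) 0 1 y = x i j := by
  have hmono : ∀ i, Monotone (cdf (x i)) := fun i => cdf_mono (hx0 i)
  have hlast : ∀ i, cdf (x i) (n + 1) = 1 := fun i => cdf_of_le (hx1 i) le_rfl
  rw [sum_filter_comonotonePlan hmono (fun _ => cdf_zero.le) (fun i => (hlast i).ge),
    max_eq_right (cdf_zero (x := x i) ▸ hmono i (Nat.zero_le _)),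
    min_eq_right (hlast i ▸ hmono i j.2), cdf_succ, lengthIcc, add_sub_cancel_left,
    max_eq_right (hx0 i j)]

theorem cost_comonotonePlan_cdf_le (hx0 : ∀ i k, 0 ≤ x i k) (hx1 : ∀ i, ∑ k, x i k = 1) :
    ∑ y : Fin d → Fin (n + 1),
        Cmin (fun i => ((y i : ℕ) + 1 : ℝ)) * comonotonePlan (fun i => cdf (x i)) 0 1 y ≤
      ∑ j ∈ Icc 1 n, Cmin (fun i => cdf (x i) j) := by
  simp_rw [Cmin_succ_eq_sum_Cmin_layer, sum_mul]
  rw [sum_comm]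
  exact sum_le_sum fun j hj => sum_Cmin_layer_mul_comonotonePlan_le (fun i => cdf_mono (hx0 i))
    (fun _ => cdf_zero) (fun i => cdf_of_le (hx1 i) le_rfl) (mem_Icc.1 hj).2

end Coupling

/-- The ground set `{1, …, n + 1}` is indexed by `Fin (n + 1)`, the point of index `y i`
being `y i + 1`. -/
theorem stmt10_general (n d : ℕ) (x : Fin d → Fin (n + 1) → ℝ)
    (hx : ∀ i, (∀ k, 0 ≤ x i k) ∧ ∑ k, x i k = 1) :
    IsLeast { s : ℝ | ∃ T : (Fin d → Fin (n + 1)) → ℝ,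
        (∀ y, 0 ≤ T y) ∧
        (∀ (i : Fin d) (j : Fin (n + 1)),
          ∑ y ∈ Finset.univ.filter (fun y : Fin d → Fin (n + 1) => y i = j), T y = x i j) ∧
        s = ∑ y : Fin d → Fin (n + 1), Cmin (fun i => ((y i : ℕ) + 1 : ℝ)) * T y }
      (∑ j ∈ Finset.Icc 1 n, Cmin (fun i => cdf (x i) j)) := by
  have hx0 : ∀ i k, 0 ≤ x i k := fun i => (hx i).1
  have hx1 : ∀ i, ∑ k, x i k = 1 := fun i => (hx i).2
  have hmarg := sum_filter_comonotonePlan_cdf hx0 hx1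
  refine ⟨⟨_, comonotonePlan_nonneg _ _ _, hmarg, le_antisymm
    (sum_Cmin_cdf_le_cost (comonotonePlan_nonneg _ _ _) hmarg)
    (cost_comonotonePlan_cdf_le hx0 hx1)⟩, ?_⟩
  rintro s ⟨T, hT0, hT, rfl⟩
  exact sum_Cmin_cdf_le_cost hT0 hT

/-- The generalized EMD — i.e. the minimum of `∑_y C(y) T(y)` over all nonnegative
transport plans `T` with margins `x¹, …, x^d` (here the ground set `{1,…,n+1}` is
indexed by `Fin (n+1)`, the point of index `y i` being `(y i) + 1`) — equals
`∑_{j=1}^{n} C(X¹_j, …, X^d_j)`. -/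
theorem stmt10 (n d : ℕ) (hn : 1 ≤ n) (hd : 2 ≤ d) (x : Fin d → Fin (n + 1) → ℝ)
    (hx : ∀ i, (∀ k, 0 ≤ x i k) ∧ ∑ k, x i k = 1) :
    IsLeast { s : ℝ | ∃ T : (Fin d → Fin (n + 1)) → ℝ,
        (∀ y, 0 ≤ T y) ∧
        (∀ (i : Fin d) (j : Fin (n + 1)),
          ∑ y ∈ Finset.univ.filter (fun y : Fin d → Fin (n + 1) => y i = j), T y = x i j) ∧
        s = ∑ y : Fin d → Fin (n + 1), Cmin (fun i => ((y i : ℕ) + 1 : ℝ)) * T y }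
      (∑ j ∈ Finset.Icc 1 n, Cmin (fun i => cdf (x i) j)) :=
  stmt10_general n d x hx
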